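/- Let V be an m-dimensional vector space over ZMod p with basis e_0, ..., e_{m-1}, and let C_1, ..., C_L be a USPM AIEP code over ZMod p (so that no sum of choices is zero and all sums are distinct). Then the cascaded code on all mL pairs {e_i·C_l : 0 ≤ i < m, 1 ≤ l ≤ L} has an injective sum map: the map from the product of all mL pairs to V sending a choice to the total sum is injective. -/

import Mathlib

/-!
Writing the total sum in the basis `e`, its `e i`-coordinate is the scalar sum of the choices
made on the pairs `e i • C 1, …, e i • C L`. A vector determines its coordinates, and by
hypothesis each coordinate determines the choices that produced it.
-/

open Function

theorem Module.Basis.injective_sum_comp_smul {ι R M β : Type*} [Fintype ι] [Semiring R]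
    [AddCommMonoid M] [Module R M] (e : Module.Basis ι R M) {f : β → R}
    (hf : Function.Injective f) :
    Function.Injective fun x : ι → β => ∑ i, f (x i) • e i :=
  e.linearIndependent.fintypeLinearCombination_injective.comp (Injective.piMap fun _ => hf)

theorem stmt_11_general (p m L : ℕ) (V : Type*) [AddCommGroup V]
    [Module (ZMod p) V] (e : Module.Basis (Fin m) (ZMod p) V)
    (c : Fin L → ZMod p)
    (hinj : Function.Injective
      (fun ε : Fin L → Bool => ∑ l, if ε l then -(c l) else c l)) :
    Function.Injective (fun ε : Fin m × Fin L → Bool =>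
      ∑ il : Fin m × Fin L, (if ε il then -(c il.2) else c il.2) • e il.1) := by
  have sum_by_rows : ∀ ε : Fin m × Fin L → Bool,
      ∑ il : Fin m × Fin L, (if ε il then -(c il.2) else c il.2) • e il.1 =
        ∑ i, (∑ l, if Equiv.curry _ _ _ ε i l then -(c l) else c l) • e i := by
    intro ε
    simp only [Fintype.sum_prod_type, Finset.sum_smul, Equiv.curry_apply, curry_apply]
  simp only [sum_by_rows]
  exact (e.injective_sum_comp_smul hinj).comp (Equiv.curry _ _ _).injective

/-- The cascaded code on all `m·L` scaled pairs `e i • C l` has an injective sum map: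
choices from all `m·L` pairs yield `2^(mL)` distinct sums in `V`. -/
theorem stmt_11 (p m L : ℕ) [Fact p.Prime] (V : Type*) [AddCommGroup V]
    [Module (ZMod p) V] (e : Module.Basis (Fin m) (ZMod p) V)
    (c : Fin L → ZMod p) (hc : ∀ l, c l ≠ 0)
    (hinj : Function.Injective
      (fun ε : Fin L → Bool => ∑ l, if ε l then -(c l) else c l)) :
    Function.Injective (fun ε : Fin m × Fin L → Bool =>
      ∑ il : Fin m × Fin L, (if ε il then -(c il.2) else c il.2) • e il.1) :=
  stmt_11_general p m L V e c hinj
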